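/- Every preferred answer set of (P,<) under the fragment-based semantics G is a preferred answer set under the direct-conflict semantics D (i.e., G ⊆ D). -/

import Mathlib

/-- A literal over atoms `A`: `(true, a)` is the atom `a`, `(false, a)` is `¬ a`. -/
abbrev Lit (A : Type) := Bool × A

/-- A rule with head, positive body and negative body. -/
structure Rule (A : Type) where
  head : Lit A
  pos : Set (Lit A)
  neg : Set (Lit A)

variable {A : Type}

/-- Heads of a set of rules. -/
def headSet (R : Set (Rule A)) : Set (Lit A) := Rule.head '' R

/-- `R ⊆ P` positively satisfies `P`. -/
def PosSat (P R : Set (Rule A)) : Prop :=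
  R ⊆ P ∧ ∀ r ∈ P, r.pos ⊆ headSet R → r ∈ R

/-- The minimal set of rules positively satisfying `P`. -/
def MP (P : Set (Rule A)) : Set (Rule A) := ⋂₀ {R | PosSat P R}

/-- A set of rules defeats a rule. -/
def defeatsRule (R : Set (Rule A)) (r : Rule A) : Prop :=
  (headSet R ∩ r.neg).Nonempty

/-- A set of rules defeats a set of rules. -/
def defeatsSet (R₁ R₂ : Set (Rule A)) : Prop := ∃ r ∈ R₂, defeatsRule R₁ r

/-- The reduct `P^R` removes each rule defeated by `R`. -/
def reduct (P R : Set (Rule A)) : Set (Rule A) := {r ∈ P | ¬ defeatsRule R r}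

/-- `R ⊆ P` is a generating set of `P` iff `R = MP (P^R)`. -/
def GenSet (P R : Set (Rule A)) : Prop := R ⊆ P ∧ R = MP (reduct P R)

/-- A set of literals is consistent iff it contains no complementary pair. -/
def Consistent (S : Set (Lit A)) : Prop :=
  ∀ a : A, ¬ (((true, a) ∈ S) ∧ ((false, a) ∈ S))

/-- Answer sets via generating sets. -/
def AnswerSet (P : Set (Rule A)) (S : Set (Lit A)) : Prop :=
  Consistent S ∧ ∃ R, GenSet P R ∧ headSet R = S

/-- `Γ_S(P)`: rules whose positive body is in `S` and negative body disjoint from `S`. -/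
def Gamma (S : Set (Lit A)) (P : Set (Rule A)) : Set (Rule A) :=
  {r ∈ P | r.pos ⊆ S ∧ r.neg ∩ S = ∅}

/-- Fragments of a program. -/
def Frag (P : Set (Rule A)) : Set (Set (Rule A)) := {R | R ⊆ P ∧ MP R = R}

/-- Fragment reduct: remove fragments defeated by a member of `E`. -/
def fragReduct (P : Set (Rule A)) (E : Set (Set (Rule A))) : Set (Set (Rule A)) :=
  {X ∈ Frag P | ¬ ∃ Y ∈ E, defeatsSet Y X}

/-- Stable fragment sets. -/
def StableFragSet (P : Set (Rule A)) (E : Set (Set (Rule A))) : Prop :=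
  E ⊆ Frag P ∧ fragReduct P E = E

/-- Mutually defeating (conflicting) sets of rules. -/
def Conflicting (X Y : Set (Rule A)) : Prop := defeatsSet X Y ∧ defeatsSet Y X

/-- `X` overrides `Y` w.r.t. the preference relation `lt`. -/
def Overrides (lt : Rule A → Rule A → Prop) (X Y : Set (Rule A)) : Prop :=
  Conflicting X Y ∧
    ∀ r₁ ∈ X, defeatsRule Y r₁ → ∃ r₂ ∈ Y, defeatsRule X r₂ ∧ lt r₂ r₁

/-- Preferred fragment reduct (semantics G). -/
def prefFragReduct (lt : Rule A → Rule A → Prop) (P : Set (Rule A))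
    (E : Set (Set (Rule A))) : Set (Set (Rule A)) :=
  {X ∈ Frag P | ¬ ∃ Y ∈ E, defeatsSet Y X ∧ ¬ Overrides lt X Y}

/-- Preferred stable fragment sets (semantics G). -/
def PrefStableFragSet (lt : Rule A → Rule A → Prop) (P : Set (Rule A))
    (E : Set (Set (Rule A))) : Prop :=
  E ⊆ Frag P ∧ prefFragReduct lt P E = E

/-- Preferred answer sets under the fragment-based semantics G. -/
def GPrefAnswerSet (lt : Rule A → Rule A → Prop) (P : Set (Rule A))
    (S : Set (Lit A)) : Prop :=
  Consistent S ∧ ∃ E, PrefStableFragSet lt P E ∧ headSet (⋃₀ E) = S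

/-- `T(r,R)` for semantics GNO. -/
def Trules (lt : Rule A → Rule A → Prop) (r : Rule A) (R : Set (Rule A)) :
    Set (Rule A) :=
  MP {p ∈ R | ¬ lt p r}

/-- GNO reduct: remove rules `r` with `body⁻(r) ∩ head(T(r,R)) ≠ ∅`. -/
def gnoReduct (lt : Rule A → Rule A → Prop) (P R : Set (Rule A)) : Set (Rule A) :=
  {r ∈ P | ¬ (r.neg ∩ headSet (Trules lt r R)).Nonempty}

/-- GNO-preferred generating sets. -/
def GNOPrefGen (lt : Rule A → Rule A → Prop) (P R : Set (Rule A)) : Prop :=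
  GenSet P R ∧ R = MP (gnoReduct lt P R)

/-- GNO-preferred answer sets. -/
def GNOPrefAnswerSet (lt : Rule A → Rule A → Prop) (P : Set (Rule A))
    (S : Set (Lit A)) : Prop :=
  Consistent S ∧ ∃ R, GNOPrefGen lt P R ∧ headSet R = S

/-- A rule defeats a rule. -/
def defeats (r₁ r₂ : Rule A) : Prop := r₁.head ∈ r₂.neg

/-- `r₁` directly overrides `r₂` w.r.t. `lt`. -/
def DirOverrides (lt : Rule A → Rule A → Prop) (r₁ r₂ : Rule A) : Prop :=
  (defeats r₁ r₂ ∧ defeats r₂ r₁) ∧ lt r₂ r₁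

/-- D-reduct for the direct-conflict semantics. -/
def dReduct (lt : Rule A → Rule A → Prop) (P R : Set (Rule A)) : Set (Rule A) :=
  {r₁ ∈ P | ¬ ∃ r₂ ∈ R, defeats r₂ r₁ ∧ ¬ DirOverrides lt r₁ r₂}

/-- D-preferred generating sets. -/
def DPrefGen (lt : Rule A → Rule A → Prop) (P R : Set (Rule A)) : Prop :=
  R = MP (dReduct lt P R)

/-- D-preferred answer sets. -/
def DPrefAnswerSet (lt : Rule A → Rule A → Prop) (P : Set (Rule A))
    (S : Set (Lit A)) : Prop :=
  Consistent S ∧ ∃ R, DPrefGen lt P R ∧ headSet R = S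

/-- Stratified programs. -/
def Stratified (P : Set (Rule A)) : Prop :=
  ∃ lam : Lit A → ℕ, ∀ r ∈ P,
    (∀ l ∈ r.pos, lam l ≤ lam r.head) ∧ (∀ l ∈ r.neg, lam l < lam r.head)

/-!
A preferred stable fragment set `E` of a finite program has no internal defeat: if `Y ∈ E`
defeated `X ∈ E`, each would override the other, and following the preference witnesses back
and forth would give an infinite strictly descending chain of rules in the finite set `X ∪ Y`.
Hence `R = ⋃₀ E` defeats none of its own rules and lies in the D-reduct. Conversely, a rule `r`
of the D-reduct whose positive body is derived by `R` directly overrides every rule of `R`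
defeating it, so the fragment `insert r R` overrides every member of `E` that defeats it;
stability of `E` then puts `insert r R` in `E`, i.e. `r ∈ R`. Thus `R = MP (dReduct lt P R)`.
-/

section MP

variable {P Q R X : Set (Rule A)}

lemma posSat_self (Q : Set (Rule A)) : PosSat Q Q := ⟨subset_rfl, fun _ hr _ => hr⟩

lemma MP_subset (Q : Set (Rule A)) : MP Q ⊆ Q :=
  Set.sInter_subset_of_mem (posSat_self Q)

lemma MP_subset_of_posSat (h : PosSat Q R) : MP Q ⊆ R :=
  Set.sInter_subset_of_mem h

lemma headSet_mono (h : Q ⊆ R) : headSet Q ⊆ headSet R := Set.image_mono h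

lemma posSat_MP (Q : Set (Rule A)) : PosSat Q (MP Q) :=
  ⟨MP_subset Q, fun r hr hpos _ hR =>
    hR.2 r hr (hpos.trans (headSet_mono (Set.sInter_subset_of_mem hR)))⟩

lemma MP_mono (h : Q ⊆ R) : MP Q ⊆ MP R := by
  have hps : PosSat Q (MP R ∩ Q) :=
    ⟨Set.inter_subset_right, fun r hr hpos =>
      ⟨(posSat_MP R).2 r (h hr) (hpos.trans (headSet_mono Set.inter_subset_left)), hr⟩⟩
  exact (MP_subset_of_posSat hps).trans Set.inter_subset_left

lemma subset_MP_of_mem_Frag (hX : X ∈ Frag P) (h : X ⊆ Q) : X ⊆ MP Q :=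
  hX.2 ▸ MP_mono h

lemma sUnion_mem_Frag {E : Set (Set (Rule A))} (hE : E ⊆ Frag P) : ⋃₀ E ∈ Frag P :=
  ⟨Set.sUnion_subset fun _ hX => (hE hX).1,
    (MP_subset _).antisymm <| Set.sUnion_subset fun _ hX =>
      subset_MP_of_mem_Frag (hE hX) (Set.subset_sUnion_of_mem hX)⟩

lemma insert_mem_Frag {r : Rule A} (hR : R ∈ Frag P) (hr : r ∈ P) (hpos : r.pos ⊆ headSet R) :
    insert r R ∈ Frag P := by
  have hRsub : R ⊆ MP (insert r R) := subset_MP_of_mem_Frag hR (Set.subset_insert r R)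
  have hrmem : r ∈ MP (insert r R) :=
    (posSat_MP _).2 r (Set.mem_insert r R) (hpos.trans (headSet_mono hRsub))
  exact ⟨Set.insert_subset hr hR.1, (MP_subset _).antisymm (Set.insert_subset hrmem hRsub)⟩

end MP

section Defeat

variable {lt : Rule A → Rule A → Prop} {R X Y : Set (Rule A)} {r : Rule A}

lemma defeatsRule_iff : defeatsRule R r ↔ ∃ r₂ ∈ R, defeats r₂ r := by
  simp only [defeatsRule, defeats, headSet, Set.Nonempty, Set.mem_inter_iff, Set.mem_image]
  constructor
  · rintro ⟨_, ⟨r₂, hr₂, rfl⟩, hneg⟩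
    exact ⟨r₂, hr₂, hneg⟩
  · rintro ⟨r₂, hr₂, hneg⟩
    exact ⟨r₂.head, ⟨r₂, hr₂, rfl⟩, hneg⟩

lemma Overrides.not_overrides [IsStrictOrder (Rule A) lt]
    (hX : X.Finite) (hY : Y.Finite) (hXY : Overrides lt X Y) : ¬ Overrides lt Y X := by
  intro hYX
  let T : Set (Rule A) := {r | (r ∈ X ∧ defeatsRule Y r) ∨ (r ∈ Y ∧ defeatsRule X r)}
  have hT : T.Finite := (hX.union hY).subset (by rintro r (⟨h, -⟩ | ⟨h, -⟩) <;> simp [h])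
  have hdescent : ∀ r ∈ T, ∃ r' ∈ T, lt r' r := by
    rintro r (⟨hrX, hr⟩ | ⟨hrY, hr⟩)
    · obtain ⟨r', hr'Y, hr', hlt⟩ := hXY.2 r hrX hr
      exact ⟨r', Or.inr ⟨hr'Y, hr'⟩, hlt⟩
    · obtain ⟨r', hr'X, hr', hlt⟩ := hYX.2 r hrY hr
      exact ⟨r', Or.inl ⟨hr'X, hr'⟩, hlt⟩
  obtain ⟨r₀, hr₀X, hr₀⟩ := hXY.1.2
  refine (hT.wellFoundedOn (r := lt)).induction (Or.inl ⟨hr₀X, hr₀⟩) (P := fun _ => False)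
    fun r hr ih => ?_
  obtain ⟨r', hr'T, hlt⟩ := hdescent r hr
  exact ih r' hr'T hlt

lemma overrides_insert (hR : ∀ s ∈ R, ¬ defeatsRule Y s)
    (hdir : ∀ y ∈ Y, defeats y r → DirOverrides lt r y) (hY : defeatsSet Y (insert r R)) :
    Overrides lt (insert r R) Y := by
  have honly : ∀ s ∈ insert r R, defeatsRule Y s → s = r := fun s hs hdef =>
    (Set.mem_insert_iff.mp hs).resolve_right fun hsR => hR s hsR hdef
  have hwitness : ∀ s ∈ insert r R, defeatsRule Y s →
      ∃ y ∈ Y, defeatsRule (insert r R) y ∧ lt y s := by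
    intro s hs hdef
    obtain rfl := honly s hs hdef
    obtain ⟨y, hyY, hy⟩ := defeatsRule_iff.mp hdef
    obtain ⟨⟨hsy, -⟩, hlt⟩ := hdir y hyY hy
    exact ⟨y, hyY, defeatsRule_iff.mpr ⟨s, Set.mem_insert s R, hsy⟩, hlt⟩
  obtain ⟨s, hs, hdef⟩ := hY
  obtain ⟨y, hyY, hy, -⟩ := hwitness s hs hdef
  exact ⟨⟨⟨y, hyY, hy⟩, ⟨s, hs, hdef⟩⟩, hwitness⟩

lemma dirOverrides_of_mem_dReduct {P : Set (Rule A)} {r₂ : Rule A} (hr : r ∈ dReduct lt P R)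
    (hr₂ : r₂ ∈ R) (hdef : defeats r₂ r) : DirOverrides lt r r₂ :=
  not_not.mp fun h => hr.2 ⟨r₂, hr₂, hdef, h⟩

end Defeat

namespace PrefStableFragSet

variable {lt : Rule A → Rule A → Prop} {P X Y : Set (Rule A)} {E : Set (Set (Rule A))}

lemma mem_iff (hE : PrefStableFragSet lt P E) :
    X ∈ E ↔ X ∈ Frag P ∧ ¬ ∃ Y ∈ E, defeatsSet Y X ∧ ¬ Overrides lt X Y :=
  (Set.ext_iff.mp hE.2 X).symm

lemma overrides_of_defeatsSet (hE : PrefStableFragSet lt P E) (hX : X ∈ E) (hY : Y ∈ E)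
    (hdef : defeatsSet Y X) : Overrides lt X Y :=
  not_not.mp fun h => (hE.mem_iff.mp hX).2 ⟨Y, hY, hdef, h⟩

lemma not_defeatsSet [IsStrictOrder (Rule A) lt] (hE : PrefStableFragSet lt P E)
    (hP : P.Finite) (hX : X ∈ E) (hY : Y ∈ E) : ¬ defeatsSet Y X := fun hdef =>
  have hXY := hE.overrides_of_defeatsSet hX hY hdef
  Overrides.not_overrides (hP.subset (hE.1 hX).1) (hP.subset (hE.1 hY).1) hXY
    (hE.overrides_of_defeatsSet hY hX hXY.1.1)

lemma not_defeatsRule_sUnion [IsStrictOrder (Rule A) lt] (hE : PrefStableFragSet lt P E)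
    (hP : P.Finite) (hY : Y ∈ E) {r : Rule A} (hr : r ∈ ⋃₀ E) : ¬ defeatsRule Y r := by
  obtain ⟨X, hX, hrX⟩ := hr
  exact fun hdef => hE.not_defeatsSet hP hX hY ⟨r, hrX, hdef⟩

lemma sUnion_subset_dReduct [IsStrictOrder (Rule A) lt] (hE : PrefStableFragSet lt P E)
    (hP : P.Finite) : ⋃₀ E ⊆ dReduct lt P (⋃₀ E) := by
  intro r hr
  refine ⟨(sUnion_mem_Frag hE.1).1 hr, fun ⟨r₂, ⟨Y, hY, hr₂Y⟩, hdef, _⟩ => ?_⟩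
  exact hE.not_defeatsRule_sUnion hP hY hr (defeatsRule_iff.mpr ⟨r₂, hr₂Y, hdef⟩)

lemma mem_sUnion_of_mem_dReduct [IsStrictOrder (Rule A) lt] (hE : PrefStableFragSet lt P E)
    (hP : P.Finite) {r : Rule A} (hr : r ∈ dReduct lt P (⋃₀ E))
    (hpos : r.pos ⊆ headSet (⋃₀ E)) : r ∈ ⋃₀ E := by
  have hfrag : insert r (⋃₀ E) ∈ Frag P := insert_mem_Frag (sUnion_mem_Frag hE.1) hr.1 hpos
  have hmem : insert r (⋃₀ E) ∈ E := by
    refine hE.mem_iff.mpr ⟨hfrag, fun ⟨Y, hY, hdef, hnot⟩ => hnot ?_⟩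
    exact overrides_insert (fun s hs => hE.not_defeatsRule_sUnion hP hY hs)
      (fun y hy => dirOverrides_of_mem_dReduct hr ⟨Y, hY, hy⟩) hdef
  exact ⟨_, hmem, Set.mem_insert r _⟩

lemma dPrefGen_sUnion [IsStrictOrder (Rule A) lt] (hE : PrefStableFragSet lt P E)
    (hP : P.Finite) : DPrefGen lt P (⋃₀ E) := by
  have hsub := hE.sUnion_subset_dReduct hP
  refine (subset_MP_of_mem_Frag (sUnion_mem_Frag hE.1) hsub).antisymm ?_
  exact MP_subset_of_posSat ⟨hsub, fun r hr hpos => hE.mem_sUnion_of_mem_dReduct hP hr hpos⟩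

end PrefStableFragSet

/-- G ⊆ D. -/
theorem g_subset_d (P : Set (Rule A)) (hP : P.Finite)
    (lt : Rule A → Rule A → Prop) (htrans : Transitive lt)
    (hasymm : ∀ r₁ r₂, lt r₁ r₂ → ¬ lt r₂ r₁)
    (S : Set (Lit A)) (h : GPrefAnswerSet lt P S) :
    DPrefAnswerSet lt P S := by
  obtain ⟨hcons, E, hE, rfl⟩ := h
  have : IsStrictOrder (Rule A) lt :=
    { irrefl := fun r hr => hasymm r r hr hr, trans := fun _ _ _ => @htrans _ _ _ }
  exact ⟨hcons, ⋃₀ E, hE.dPrefGen_sUnion hP, rfl⟩
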